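/- arXiv:2306.15571 — 3 statements merged into one kernel-verified Lean document; each statement's English description precedes it below -/
import Mathlib

section
/- Let γ ∈ ℝ and p_γ(ξ) = 4π²|ξ|² / (4π²|ξ|² + 2πi γ ξ₁) for ξ ∈ ℝ² \ {0}. Then the partial derivative ∂₁ p_γ(ξ) = 2πi γ (ξ₁² − ξ₂²) / (2π|ξ|² + iγξ₁)², and for all ξ ∈ ℝ² \ {0} one has |ξ₁ ∂₁ p_γ(ξ)| ≤ 1/2. -/
/-!
Dividing numerator and denominator by `2π` writes `p_γ = a / w` with `a = 2π|ξ|²` and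
`w = a + iγξ₁`, so the quotient rule gives `∂₁ p_γ`. Then
`ξ₁ ∂₁ p_γ = i · (ξ₁² − ξ₂²)/|ξ|² · Re w · Im w / w²`, and the bound is AM–GM in the form
`|Re w · Im w| ≤ |w|²/2`.
-/

open Real Complex

/-- The anisotropic parameterization symbol
`p_γ(ξ) = 4π²|ξ|² / (4π²|ξ|² + 2πi γ ξ₁)` for `ξ = (ξ₁, ξ₂) ∈ ℝ²`. -/
noncomputable def pSymb (γ ξ₁ ξ₂ : ℝ) : ℂ :=
  (4 * (Real.pi : ℂ) ^ 2 * ((ξ₁ : ℂ) ^ 2 + (ξ₂ : ℂ) ^ 2)) /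
    (4 * (Real.pi : ℂ) ^ 2 * ((ξ₁ : ℂ) ^ 2 + (ξ₂ : ℂ) ^ 2) +
      2 * (Real.pi : ℂ) * Complex.I * (γ : ℂ) * (ξ₁ : ℂ))

/-- The claimed value of the partial derivative `∂₁ p_γ(ξ)`:
`2πi γ (ξ₁² − ξ₂²) / (2π|ξ|² + iγξ₁)²`. -/
noncomputable def pSymbD1 (γ ξ₁ ξ₂ : ℝ) : ℂ :=
  (2 * (Real.pi : ℂ) * Complex.I * (γ : ℂ) * ((ξ₁ : ℂ) ^ 2 - (ξ₂ : ℂ) ^ 2)) /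
    (2 * (Real.pi : ℂ) * ((ξ₁ : ℂ) ^ 2 + (ξ₂ : ℂ) ^ 2) + Complex.I * (γ : ℂ) * (ξ₁ : ℂ)) ^ 2

noncomputable def pSymbDenom (γ ξ₁ ξ₂ : ℝ) : ℂ :=
  2 * (Real.pi : ℂ) * ((ξ₁ : ℂ) ^ 2 + (ξ₂ : ℂ) ^ 2) + Complex.I * (γ : ℂ) * (ξ₁ : ℂ)

lemma pSymbDenom_eq (γ ξ₁ ξ₂ : ℝ) :
    pSymbDenom γ ξ₁ ξ₂ = ((2 * π * (ξ₁ ^ 2 + ξ₂ ^ 2) : ℝ) : ℂ) + ((γ * ξ₁ : ℝ) : ℂ) * I := by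
  unfold pSymbDenom; push_cast; ring

lemma pSymbDenom_re (γ ξ₁ ξ₂ : ℝ) : (pSymbDenom γ ξ₁ ξ₂).re = 2 * π * (ξ₁ ^ 2 + ξ₂ ^ 2) := by
  rw [pSymbDenom_eq]
  simp only [add_re, ofReal_re, mul_re, I_re, I_im, ofReal_im]
  ring

lemma pSymbDenom_im (γ ξ₁ ξ₂ : ℝ) : (pSymbDenom γ ξ₁ ξ₂).im = γ * ξ₁ := by
  rw [pSymbDenom_eq]
  simp only [add_im, ofReal_re, mul_im, I_re, I_im, ofReal_im]
  ring

lemma pSymbDenom_ne_zero {γ ξ₁ ξ₂ : ℝ} (hξ : (ξ₁, ξ₂) ≠ (0, 0)) : pSymbDenom γ ξ₁ ξ₂ ≠ 0 := by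
  have hξ' : ξ₁ ≠ 0 ∨ ξ₂ ≠ 0 := by
    rw [Ne, Prod.mk.injEq, not_and_or] at hξ; exact hξ
  have hre : 0 < (pSymbDenom γ ξ₁ ξ₂).re := by
    rw [pSymbDenom_re]
    rcases hξ' with h | h <;> positivity
  exact fun h ↦ hre.ne' (by simp [h])

lemma pSymb_eq_div_pSymbDenom (γ ξ₁ ξ₂ : ℝ) :
    pSymb γ ξ₁ ξ₂ = 2 * (π : ℂ) * ((ξ₁ : ℂ) ^ 2 + (ξ₂ : ℂ) ^ 2) / pSymbDenom γ ξ₁ ξ₂ := by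
  have h2π : (2 * π : ℂ) ≠ 0 := by exact_mod_cast two_pi_pos.ne'
  rw [pSymb, pSymbDenom, ← mul_div_mul_left (2 * (π : ℂ) * ((ξ₁ : ℂ) ^ 2 + (ξ₂ : ℂ) ^ 2)) _ h2π]
  congr 1 <;> ring

lemma pSymbD1_eq (γ ξ₁ ξ₂ : ℝ) :
    pSymbD1 γ ξ₁ ξ₂ =
      2 * (π : ℂ) * I * γ * ((ξ₁ : ℂ) ^ 2 - (ξ₂ : ℂ) ^ 2) / pSymbDenom γ ξ₁ ξ₂ ^ 2 := rfl

lemma abs_re_mul_im_le (z : ℂ) : |z.re * z.im| ≤ ‖z‖ ^ 2 / 2 := by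
  rw [Complex.sq_norm, normSq_apply, abs_mul, ← abs_mul_abs_self z.re, ← abs_mul_abs_self z.im,
    ← sq, ← sq]
  linarith [two_mul_le_add_sq |z.re| |z.im|]

lemma norm_mul_pSymbD1_le (γ ξ₁ ξ₂ : ℝ) : ‖(ξ₁ : ℂ) * pSymbD1 γ ξ₁ ξ₂‖ ≤ 1 / 2 := by
  set w := pSymbDenom γ ξ₁ ξ₂
  have hnum : (ξ₁ : ℂ) * (2 * π * I * γ * ((ξ₁ : ℂ) ^ 2 - (ξ₂ : ℂ) ^ 2))
      = ((2 * π * (ξ₁ ^ 2 - ξ₂ ^ 2) * (γ * ξ₁) : ℝ) : ℂ) * I := by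
    push_cast; ring
  have hdiff : |ξ₁ ^ 2 - ξ₂ ^ 2| ≤ ξ₁ ^ 2 + ξ₂ ^ 2 := by
    rw [abs_le]; constructor <;> linarith [sq_nonneg ξ₁, sq_nonneg ξ₂]
  have hnum_le : |2 * π * (ξ₁ ^ 2 - ξ₂ ^ 2) * (γ * ξ₁)| ≤ |w.re * w.im| := by
    rw [pSymbDenom_re, pSymbDenom_im, abs_mul, abs_mul (2 * π * _), abs_mul,
      abs_of_pos two_pi_pos, abs_of_nonneg (by positivity : 0 ≤ 2 * π * (ξ₁ ^ 2 + ξ₂ ^ 2))]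
    gcongr
  rw [pSymbD1_eq, ← mul_div_assoc, hnum, norm_div, norm_mul, norm_real, norm_I, mul_one, norm_pow,
    Real.norm_eq_abs]
  refine div_le_of_le_mul₀ (by positivity) (by norm_num) ?_
  linarith [hnum_le.trans (abs_re_mul_im_le w)]

/-- For `ξ ∈ ℝ² \ {0}` the symbol `p_γ` is differentiable in `ξ₁` with
`∂₁ p_γ(ξ) = 2πi γ (ξ₁² − ξ₂²) / (2π|ξ|² + iγξ₁)²`, and `|ξ₁ ∂₁ p_γ(ξ)| ≤ 1/2`. -/
theorem hasDerivAt_pSymb_fst (γ ξ₁ ξ₂ : ℝ) (hξ : (ξ₁, ξ₂) ≠ (0, 0)) :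
    HasDerivAt (fun t : ℝ => pSymb γ t ξ₂) (pSymbD1 γ ξ₁ ξ₂) ξ₁ ∧
      ‖(ξ₁ : ℂ) * pSymbD1 γ ξ₁ ξ₂‖ ≤ 1 / 2 := by
  refine ⟨?_, norm_mul_pSymbD1_le γ ξ₁ ξ₂⟩
  have hw := pSymbDenom_ne_zero (γ := γ) hξ
  have hcoe : HasDerivAt (fun t : ℝ => (t : ℂ)) 1 ξ₁ := hasDerivAt_id ξ₁ |>.ofReal_comp
  have hnum : HasDerivAt (fun t : ℝ => 2 * (π : ℂ) * ((t : ℂ) ^ 2 + (ξ₂ : ℂ) ^ 2))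
      (2 * (π : ℂ) * (2 * (ξ₁ : ℂ))) ξ₁ := by
    simpa using ((hcoe.pow 2).add_const ((ξ₂ : ℂ) ^ 2)).const_mul (2 * (π : ℂ))
  have hdenom : HasDerivAt (fun t : ℝ => pSymbDenom γ t ξ₂)
      (2 * (π : ℂ) * (2 * (ξ₁ : ℂ)) + I * γ) ξ₁ := by
    unfold pSymbDenom
    simpa using hnum.fun_add (hcoe.const_mul (I * γ))
  simp_rw [pSymb_eq_div_pSymbDenom]
  refine (hnum.fun_div hdenom hw).congr_deriv ?_
  rw [pSymbD1_eq, pSymbDenom]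
  ring
end

section
/- Let γ ∈ ℝ and p_γ(ξ) = 4π²|ξ|² / (4π²|ξ|² + 2πi γ ξ₁) for ξ ∈ ℝ² \ {0}. Then ∂₂ p_γ(ξ) = 4πi γ ξ₁ ξ₂ / (2π|ξ|² + iγξ₁)², and for all ξ ∈ ℝ² \ {0} one has |ξ₂ ∂₂ p_γ(ξ)| ≤ 1. -/
open Real Complex

/-- The claimed value of the partial derivative `∂₂ p_γ(ξ)`:
`4πi γ ξ₁ ξ₂ / (2π|ξ|² + iγξ₁)²`. -/
noncomputable def pSymbD2 (γ ξ₁ ξ₂ : ℝ) : ℂ :=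
  (4 * (Real.pi : ℂ) * Complex.I * (γ : ℂ) * (ξ₁ : ℂ) * (ξ₂ : ℂ)) /
    (2 * (Real.pi : ℂ) * ((ξ₁ : ℂ) ^ 2 + (ξ₂ : ℂ) ^ 2) + Complex.I * (γ : ℂ) * (ξ₁ : ℂ)) ^ 2

/-! As a function of `ξ₂`, `p_γ = f / (f + b)` with `f = 4π²|ξ|²` and `b = 2πiγξ₁` constant, so
`∂₂ p_γ = f' b / (f + b)²`. Writing `2π|ξ|² + iγξ₁ = A + iB`, one gets `ξ₂ ∂₂ p_γ = 2i a B / (A + iB)²`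
with `0 ≤ a = 2πξ₂² ≤ A`, whose modulus is `2a|B| / (A² + B²) ≤ 2A|B| / (A² + B²) ≤ 1` by AM–GM. -/

theorem HasDerivAt.div_add_const {𝕜 𝕜' : Type*} [NontriviallyNormedField 𝕜]
    [NontriviallyNormedField 𝕜'] [NormedAlgebra 𝕜 𝕜'] {f : 𝕜 → 𝕜'} {f' : 𝕜'} {x : 𝕜}
    (hf : HasDerivAt f f' x) (b : 𝕜') (hx : f x + b ≠ 0) :
    HasDerivAt (fun y => f y / (f y + b)) (f' * b / (f x + b) ^ 2) x :=
  (hf.fun_div (hf.add_const b) hx).congr_deriv (by ring)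

theorem norm_two_mul_I_mul_div_sq_le_one {A a b : ℝ} (ha : 0 ≤ a) (haA : a ≤ A) :
    ‖2 * I * a * b / ((A : ℂ) + b * I) ^ 2‖ ≤ 1 := by
  have hnorm : ‖2 * I * a * b / ((A : ℂ) + b * I) ^ 2‖ = 2 * a * |b| / (A ^ 2 + b ^ 2) := by
    rw [norm_div, norm_pow, Complex.sq_norm, normSq_add_mul_I]
    simp [abs_of_nonneg ha]
  rw [hnorm]
  refine div_le_one_of_le₀ ?_ (by positivity)
  calc 2 * a * |b| ≤ 2 * A * |b| := by gcongr
    _ ≤ A ^ 2 + |b| ^ 2 := two_mul_le_add_sq A |b|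
    _ = A ^ 2 + b ^ 2 := by rw [sq_abs]

theorem pSymb_denom_ne_zero (γ : ℝ) {ξ₁ ξ₂ : ℝ} (hξ : (ξ₁, ξ₂) ≠ (0, 0)) :
    4 * (π : ℂ) ^ 2 * ((ξ₁ : ℂ) ^ 2 + (ξ₂ : ℂ) ^ 2) + 2 * π * I * γ * ξ₁ ≠ 0 := by
  have hS : 0 < ξ₁ ^ 2 + ξ₂ ^ 2 := by
    have : ξ₁ ≠ 0 ∨ ξ₂ ≠ 0 := by contrapose! hξ; simp [hξ]
    rcases this with h | h <;> positivity
  have hre : 4 * (π : ℂ) ^ 2 * ((ξ₁ : ℂ) ^ 2 + (ξ₂ : ℂ) ^ 2) + 2 * π * I * γ * ξ₁ =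
      ((4 * π ^ 2 * (ξ₁ ^ 2 + ξ₂ ^ 2) : ℝ) : ℂ) + ((2 * π * γ * ξ₁ : ℝ) : ℂ) * I := by
    push_cast; ring
  rw [hre]
  intro h
  have hre0 := congrArg re h
  rw [add_re, ofReal_re, re_ofReal_mul, I_re, mul_zero, add_zero, zero_re] at hre0
  exact (by positivity : (0 : ℝ) < 4 * π ^ 2 * (ξ₁ ^ 2 + ξ₂ ^ 2)).ne' hre0

theorem norm_ofReal_mul_pSymbD2_le_one (γ ξ₁ ξ₂ : ℝ) : ‖(ξ₂ : ℂ) * pSymbD2 γ ξ₁ ξ₂‖ ≤ 1 := by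
  have hrw : (ξ₂ : ℂ) * pSymbD2 γ ξ₁ ξ₂ = 2 * I * ((2 * π * ξ₂ ^ 2 : ℝ) : ℂ) * ((γ * ξ₁ : ℝ) : ℂ) /
      (((2 * π * (ξ₁ ^ 2 + ξ₂ ^ 2) : ℝ) : ℂ) + ((γ * ξ₁ : ℝ) : ℂ) * I) ^ 2 := by
    rw [pSymbD2]; push_cast; ring
  rw [hrw]
  exact norm_two_mul_I_mul_div_sq_le_one (by positivity) (by nlinarith [pi_pos, sq_nonneg ξ₁])

/-- For `ξ ∈ ℝ² \ {0}` the symbol `p_γ` is differentiable in `ξ₂` with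
`∂₂ p_γ(ξ) = 4πi γ ξ₁ ξ₂ / (2π|ξ|² + iγξ₁)²`, and `|ξ₂ ∂₂ p_γ(ξ)| ≤ 1`. -/
theorem hasDerivAt_pSymb_snd (γ ξ₁ ξ₂ : ℝ) (hξ : (ξ₁, ξ₂) ≠ (0, 0)) :
    HasDerivAt (fun t : ℝ => pSymb γ ξ₁ t) (pSymbD2 γ ξ₁ ξ₂) ξ₂ ∧
      ‖(ξ₂ : ℂ) * pSymbD2 γ ξ₁ ξ₂‖ ≤ 1 := by
  refine ⟨?_, norm_ofReal_mul_pSymbD2_le_one γ ξ₁ ξ₂⟩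
  have hf : HasDerivAt (fun t : ℝ => 4 * (π : ℂ) ^ 2 * ((ξ₁ : ℂ) ^ 2 + (t : ℂ) ^ 2))
      (4 * (π : ℂ) ^ 2 * (2 * (ξ₂ : ℂ))) ξ₂ := by
    simpa using (((hasDerivAt_pow 2 (ξ₂ : ℂ)).const_add ((ξ₁ : ℂ) ^ 2)).const_mul
      (4 * (π : ℂ) ^ 2)).comp_ofReal
  have hD := pSymb_denom_ne_zero γ hξ
  have hz : 2 * (π : ℂ) * ((ξ₁ : ℂ) ^ 2 + (ξ₂ : ℂ) ^ 2) + I * γ * ξ₁ ≠ 0 := fun h =>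
    hD (by linear_combination 2 * (π : ℂ) * h)
  refine (hf.div_add_const _ hD).congr_deriv ?_
  rw [pSymbD2, div_eq_div_iff (pow_ne_zero 2 hD) (pow_ne_zero 2 hz)]
  ring
end

section
/- Let b > 0 and s ∈ ℕ with s ≥ 1. There exists a constant C > 0 (depending on b and s) such that for all φ ∈ H^s((0,b); ℂ), the trace value at the endpoint satisfies |φ(b)| ≤ C ‖φ‖_{L²(0,b)}^{1 − 1/(2s)} ‖φ‖_{H^s(0,b)}^{1/(2s)}. -/
/-!
Integrating by parts `s` times against a polynomial kernel on `[0, 1]` that vanishes to order `s`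
at `0` and to order `s - 1` at `1` expresses `ψ 1` through `ψ⁽ˢ⁾` and `ψ` on `[0, 1]`, so
`‖ψ 1‖ ≤ M (‖ψ⁽ˢ⁾‖_{L¹} + ‖ψ‖_{L¹})`. Rescaling to `[b - r², b]` and applying Cauchy–Schwarz gives
`‖φ b‖ ≤ M (‖φ⁽ˢ⁾‖_{L²} r ^ (2s - 1) + ‖φ‖_{L²} / r)` for every `0 < r ≤ √b`. Choosing
`r ^ (2s) = ‖φ‖_{L²} / ‖φ‖_{Hˢ}`, or `r = √b` when this is too large, balances the two terms.
-/

open MeasureTheory Real Filter Topology Set Polynomial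

variable {E : Type*} [NormedAddCommGroup E]

namespace intervalIntegral

theorem sq_integral_le_mul_integral_sq {a b : ℝ} (hab : a ≤ b) {g : ℝ → ℝ}
    (hg : Continuous g) :
    (∫ x in a..b, g x) ^ 2 ≤ (b - a) * ∫ x in a..b, g x ^ 2 := by
  set I := ∫ x in a..b, g x
  have hvar : 0 ≤ ∫ x in a..b, ((b - a) * g x - I) ^ 2 :=
    integral_nonneg hab fun x _ => sq_nonneg _
  have hexpand : ∫ x in a..b, ((b - a) * g x - I) ^ 2
      = (b - a) * ((b - a) * ∫ x in a..b, g x ^ 2) - (b - a) * I ^ 2 := by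
    have hsq : ∀ x, ((b - a) * g x - I) ^ 2
        = (b - a) ^ 2 * g x ^ 2 - (2 * (b - a) * I) * g x + I ^ 2 := fun x => by ring
    simp only [hsq]
    rw [integral_add, integral_sub, integral_const_mul, integral_const_mul, integral_const,
      smul_eq_mul]
    · ring
    all_goals exact Continuous.intervalIntegrable (by fun_prop) a b
  rcases hab.eq_or_lt with rfl | hlt
  · simp [I]
  · rw [hexpand, ← mul_sub] at hvar
    linarith [(mul_nonneg_iff_of_pos_left (sub_pos.mpr hlt)).mp hvar]

theorem integral_norm_le_sqrt_mul_sqrt {c a b : ℝ} (hca : c ≤ a) (hab : a ≤ b) {g : ℝ → E}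
    (hg : Continuous g) :
    ∫ x in a..b, ‖g x‖ ≤ √(b - a) * √(∫ x in c..b, ‖g x‖ ^ 2) := by
  rw [← sqrt_mul (by linarith)]
  refine le_sqrt_of_sq_le ((sq_integral_le_mul_integral_sq hab hg.norm).trans ?_)
  gcongr
  exact integral_mono_interval hca hab le_rfl
    (Eventually.of_forall fun x => sq_nonneg _) ((hg.norm.pow 2).intervalIntegrable c b)

variable [NormedSpace ℝ E]

theorem norm_integral_smul_le {a b K : ℝ} (hab : a ≤ b) {w : ℝ → ℝ} {g : ℝ → E}
    (hw : ∀ x ∈ Icc a b, ‖w x‖ ≤ K) (hg : IntervalIntegrable g volume a b) :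
    ‖∫ x in a..b, w x • g x‖ ≤ K * ∫ x in a..b, ‖g x‖ := by
  rw [← integral_const_mul]
  refine norm_integral_le_of_norm_le hab (ae_of_all _ fun x hx => ?_)
    (hg.norm.const_mul K)
  rw [norm_smul]
  exact mul_le_mul_of_nonneg_right (hw x (Ioc_subset_Icc_self hx)) (norm_nonneg _)

theorem integral_smul_iteratedDeriv_succ_of_iteratedDeriv_eq_zero
    [CompleteSpace E] {a b : ℝ} {f : ℝ → E} :
    ∀ (n : ℕ) {v : ℝ → ℝ}, ContDiff ℝ (n + 1) v → ContDiff ℝ (n + 1) f →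
      (∀ j ≤ n, iteratedDeriv j v a = 0) → (∀ j < n, iteratedDeriv j v b = 0) →
      ∫ x in a..b, v x • iteratedDeriv (n + 1) f x =
        (-1 : ℝ) ^ n • (iteratedDeriv n v b • f b - ∫ x in a..b, iteratedDeriv (n + 1) v x • f x)
  | n, v, hv, hf, hva, hvb => by
    have hv1 : Differentiable ℝ v := hv.differentiable (by simp)
    have hf' : ∀ x, HasDerivAt (iteratedDeriv n f) (iteratedDeriv (n + 1) f x) x := fun x => by
      rw [iteratedDeriv_succ]
      exact (hf.differentiable_iteratedDeriv n (by norm_cast; omega) x).hasDerivAt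
    rw [integral_smul_deriv_eq_deriv_smul (fun x _ => (hv1 x).hasDerivAt)
      (fun x _ => hf' x) ((hv.continuous_deriv (by simp)).intervalIntegrable a b)
      ((hf.continuous_iteratedDeriv _ le_rfl).intervalIntegrable a b),
      show v a = 0 from hva 0 n.zero_le, zero_smul, sub_zero]
    cases n with
    | zero => simp
    | succ n =>
      have hdv : ContDiff ℝ (n + 1) (deriv v) := by
        simpa using (contDiff_succ_iff_deriv.mp hv).2.2
      rw [show v b = 0 from hvb 0 n.succ_pos, zero_smul, zero_sub,
        integral_smul_iteratedDeriv_succ_of_iteratedDeriv_eq_zero n hdv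
          (hf.of_le (by norm_cast; omega))
          (fun j hj => by rw [← iteratedDeriv_succ']; exact hva _ (by omega))
          (fun j hj => by rw [← iteratedDeriv_succ']; exact hvb _ (by omega))]
      simp only [← iteratedDeriv_succ']
      rw [pow_succ, mul_neg_one, neg_smul]


theorem norm_iteratedDeriv_mul_norm_le [CompleteSpace E] {a b K : ℝ} (hab : a ≤ b) {n : ℕ}
    {v : ℝ → ℝ} {f : ℝ → E} (hv : ContDiff ℝ (n + 1) v) (hf : ContDiff ℝ (n + 1) f)
    (hva : ∀ j ≤ n, iteratedDeriv j v a = 0) (hvb : ∀ j < n, iteratedDeriv j v b = 0)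
    (hK₀ : ∀ x ∈ Icc a b, ‖v x‖ ≤ K) (hK₁ : ∀ x ∈ Icc a b, ‖iteratedDeriv (n + 1) v x‖ ≤ K) :
    ‖iteratedDeriv n v b‖ * ‖f b‖ ≤
      K * ((∫ x in a..b, ‖iteratedDeriv (n + 1) f x‖) + ∫ x in a..b, ‖f x‖) := by
  have hrepr : iteratedDeriv n v b • f b = (-1 : ℝ) ^ n • (∫ x in a..b,
      v x • iteratedDeriv (n + 1) f x) + ∫ x in a..b, iteratedDeriv (n + 1) v x • f x := by
    rw [integral_smul_iteratedDeriv_succ_of_iteratedDeriv_eq_zero n hv hf hva hvb,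
      smul_smul, ← mul_pow, neg_one_mul, neg_neg, one_pow, one_smul, sub_add_cancel]
  calc ‖iteratedDeriv n v b‖ * ‖f b‖
      = ‖iteratedDeriv n v b • f b‖ := (norm_smul _ _).symm
    _ ≤ ‖∫ x in a..b, v x • iteratedDeriv (n + 1) f x‖
        + ‖∫ x in a..b, iteratedDeriv (n + 1) v x • f x‖ := by
      rw [hrepr]
      refine (norm_add_le _ _).trans_eq ?_
      rw [norm_smul, norm_pow, norm_neg, norm_one, one_pow, one_mul]
    _ ≤ K * (∫ x in a..b, ‖iteratedDeriv (n + 1) f x‖) + K * ∫ x in a..b, ‖f x‖ :=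
      add_le_add
        (norm_integral_smul_le hab hK₀
          ((hf.continuous_iteratedDeriv _ le_rfl).intervalIntegrable a b))
        (norm_integral_smul_le hab hK₁ (hf.continuous.intervalIntegrable a b))
    _ = _ := (mul_add _ _ _).symm

end intervalIntegral

theorem Polynomial.iteratedDeriv_eval {𝕜 : Type*} [NontriviallyNormedField 𝕜] (p : 𝕜[X]) (n : ℕ) :
    iteratedDeriv n (fun x => p.eval x) = fun x => (derivative^[n] p).eval x := by
  induction n generalizing p with
  | zero => simp
  | succ n ih =>
    rw [iteratedDeriv_succ', Function.iterate_succ_apply, ← ih]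
    have hderiv : (_root_.deriv fun x => p.eval x) = fun x => p.derivative.eval x := by
      funext x
      exact p.deriv
    rw [hderiv]

variable [NormedSpace ℝ E] [CompleteSpace E]

theorem exists_norm_apply_one_le (s : ℕ) (hs : 1 ≤ s) :
    ∃ M > 0, ∀ f : ℝ → E, ContDiff ℝ s f →
      ‖f 1‖ ≤ M * ((∫ x in (0 : ℝ)..1, ‖iteratedDeriv s f x‖) + ∫ x in (0 : ℝ)..1, ‖f x‖) := by
  obtain ⟨n, rfl⟩ : ∃ n, s = n + 1 := ⟨s - 1, by omega⟩
  -- `p = (2n+1 choose n+1) X ^ (n + 1) (1 - X) ^ n`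
  set p := bernsteinPolynomial ℝ (n + 1 + n) (n + 1)
  set v : ℝ → ℝ := fun x => p.eval x
  have hv : ContDiff ℝ (n + 1) v := p.contDiff_aeval _
  have hv0 : ∀ j ≤ n, iteratedDeriv j v 0 = 0 := fun j hj => by
    rw [Polynomial.iteratedDeriv_eval]
    exact bernsteinPolynomial.iterate_derivative_at_0_eq_zero_of_lt ℝ _ (Nat.lt_succ_of_le hj)
  have hv1 : ∀ j < n, iteratedDeriv j v 1 = 0 := fun j hj => by
    rw [Polynomial.iteratedDeriv_eval]
    exact bernsteinPolynomial.iterate_derivative_at_1_eq_zero_of_lt ℝ _ (by omega)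
  have hc : iteratedDeriv n v 1 ≠ 0 := by
    rw [Polynomial.iteratedDeriv_eval]
    simpa using bernsteinPolynomial.iterate_derivative_at_1_ne_zero ℝ (n + 1 + n) (n + 1) (by omega)
  obtain ⟨K₀, hK₀⟩ := (isCompact_Icc (a := (0 : ℝ)) (b := 1)).exists_bound_of_continuousOn
    hv.continuous.continuousOn
  obtain ⟨K₁, hK₁⟩ := (isCompact_Icc (a := (0 : ℝ)) (b := 1)).exists_bound_of_continuousOn
    (hv.continuous_iteratedDeriv (n + 1) le_rfl).continuousOn
  set K := max (max K₀ K₁) 1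
  refine ⟨K / ‖iteratedDeriv n v 1‖, by positivity, fun f hf => ?_⟩
  rw [div_mul_eq_mul_div, le_div_iff₀ (norm_pos_iff.mpr hc), mul_comm]
  exact intervalIntegral.norm_iteratedDeriv_mul_norm_le zero_le_one hv hf hv0 hv1
    (fun x hx => (hK₀ x hx).trans ((le_max_left _ _).trans (le_max_left _ _)))
    (fun x hx => (hK₁ x hx).trans ((le_max_right _ _).trans (le_max_left _ _)))

theorem exists_norm_apply_right_le (s : ℕ) (hs : 1 ≤ s) :
    ∃ M > 0, ∀ f : ℝ → E, ContDiff ℝ s f → ∀ a b : ℝ, a < b →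
      ‖f b‖ ≤ M * ((b - a) ^ (s - 1) * (∫ x in a..b, ‖iteratedDeriv s f x‖)
        + (b - a)⁻¹ * ∫ x in a..b, ‖f x‖) := by
  obtain ⟨M, hM, hunit⟩ := exists_norm_apply_one_le (E := E) s hs
  refine ⟨M, hM, fun f hf a b hab => ?_⟩
  set δ := b - a
  have hδ : 0 < δ := sub_pos.mpr hab
  have hrescale : ∀ F : ℝ → ℝ, ∫ u in (0 : ℝ)..1, F (a + δ * u) = δ⁻¹ * ∫ x in a..b, F x := by
    intro F
    rw [intervalIntegral.integral_comp_add_mul F hδ.ne', smul_eq_mul, mul_zero, add_zero, mul_one,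
      add_sub_cancel]
  have hderiv : iteratedDeriv s (fun u => f (a + δ * u)) =
      fun u => δ ^ s • iteratedDeriv s f (a + δ * u) := by
    simpa [iteratedDeriv_comp_const_add] using
      iteratedDeriv_comp_const_smul (n := s) (f := fun z => f (a + z)) (hf.comp (by fun_prop)) δ
  have h := hunit (fun u => f (a + δ * u)) (hf.comp (by fun_prop))
  simp only [hderiv, norm_smul, norm_pow, norm_of_nonneg hδ.le, intervalIntegral.integral_const_mul,
    hrescale (fun x => ‖iteratedDeriv s f x‖), hrescale (fun x => ‖f x‖), mul_one,
    show a + δ = b from add_sub_cancel a b] at h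
  refine h.trans_eq ?_
  rw [pow_sub₀ _ hδ.ne' hs, pow_one]
  ring

theorem exists_norm_apply_right_le_mul_pow_add_div (s : ℕ) (hs : 1 ≤ s) :
    ∃ M > 0, ∀ f : ℝ → E, ContDiff ℝ s f → ∀ c b r : ℝ, 0 < r → c ≤ b - r ^ 2 →
      ‖f b‖ ≤ M * (√(∫ x in c..b, ‖iteratedDeriv s f x‖ ^ 2) * r ^ (2 * s - 1)
        + √(∫ x in c..b, ‖f x‖ ^ 2) / r) := by
  obtain ⟨M, hM, hloc⟩ := exists_norm_apply_right_le (E := E) s hs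
  refine ⟨M, hM, fun f hf c b r hr hc => ?_⟩
  have hab : b - r ^ 2 ≤ b := sub_le_self b (sq_nonneg r)
  have h := hloc f hf (b - r ^ 2) b (sub_lt_self b (pow_pos hr 2))
  rw [sub_sub_cancel] at h
  have hsqrt : √(r ^ 2) = r := sqrt_sq hr.le
  have hs' := intervalIntegral.integral_norm_le_sqrt_mul_sqrt hc hab
    (hf.continuous_iteratedDeriv s le_rfl)
  have h0 := intervalIntegral.integral_norm_le_sqrt_mul_sqrt hc hab hf.continuous
  rw [sub_sub_cancel, hsqrt] at hs' h0
  refine h.trans ?_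
  gcongr ?_ * ?_
  calc (r ^ 2) ^ (s - 1) * (∫ x in b - r ^ 2..b, ‖iteratedDeriv s f x‖)
        + (r ^ 2)⁻¹ * ∫ x in b - r ^ 2..b, ‖f x‖
      ≤ (r ^ 2) ^ (s - 1) * (r * √(∫ x in c..b, ‖iteratedDeriv s f x‖ ^ 2))
        + (r ^ 2)⁻¹ * (r * √(∫ x in c..b, ‖f x‖ ^ 2)) := by gcongr
    _ = _ := by
      rw [← pow_mul, show 2 * s - 1 = 2 * (s - 1) + 1 by omega, pow_succ]
      field_simp
      ring

theorem le_of_forall_le_mul_pow_add_div {X K A B R : ℝ} {n : ℕ} (hn : 2 ≤ n) (hK : 0 ≤ K)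
    (hR : 0 < R) (hB : 0 ≤ B) (hBA : B ≤ A)
    (h : ∀ r, 0 < r → r ≤ R → X ≤ K * (A * r ^ (n - 1) + B / r)) :
    X ≤ (2 + 2 / R) * K * B ^ (1 - 1 / (n : ℝ)) * A ^ (1 / (n : ℝ)) := by
  set θ : ℝ := 1 / n
  set P := B ^ (1 - θ) * A ^ θ with hP_def
  have hA : 0 ≤ A := hB.trans hBA
  have hP : 0 ≤ P := mul_nonneg (rpow_nonneg hB _) (rpow_nonneg hA _)
  rw [mul_assoc _ (B ^ _)]
  rcases hB.eq_or_lt with rfl | hBpos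
  · have hlim : Tendsto (fun r : ℝ => K * A * r ^ (n - 1)) (𝓝[>] 0) (𝓝 0) := by
      have hc : Continuous fun r : ℝ => K * A * r ^ (n - 1) := by fun_prop
      simpa [zero_pow (by omega : n - 1 ≠ 0)] using
        hc.continuousWithinAt.tendsto (x := 0) (s := Ioi 0)
    have hX : X ≤ 0 := ge_of_tendsto hlim <| by
      filter_upwards [Ioc_mem_nhdsGT hR] with r hr
      simpa [mul_assoc] using h r hr.1 hr.2
    exact hX.trans (by positivity)
  have hApos : 0 < A := hBpos.trans_le hBA
  have hpow_pred : ∀ r, r ≠ 0 → A * r ^ (n - 1) = A * r ^ n / r := fun r hr => by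
    rw [eq_div_iff hr, mul_assoc, pow_sub_one_mul (by omega)]
  -- `ρ` balances the two terms: `A * ρ ^ (n - 1) = B / ρ`.
  set ρ : ℝ := (B / A) ^ θ with hρ_def
  have hρ : 0 < ρ := rpow_pos_of_pos (div_pos hBpos hApos) _
  have hρn : A * ρ ^ n = B := by
    rw [← rpow_natCast, ← rpow_mul (div_pos hBpos hApos).le, one_div_mul_cancel (by positivity),
      rpow_one, mul_div_cancel₀ _ hApos.ne']
  have hBρ : B / ρ = P := by
    rw [hρ_def, hP_def, div_rpow hBpos.le hApos.le, rpow_sub hBpos, rpow_one]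
    field_simp
  by_cases hρR : ρ ≤ R
  · calc X ≤ K * (A * ρ ^ (n - 1) + B / ρ) := h ρ hρ hρR
      _ = K * (2 * P) := by rw [hpow_pred ρ hρ.ne', hρn, hBρ]; ring
      _ ≤ (2 + 2 / R) * K * P := by
        have : 0 ≤ 2 / R * K * P := by positivity
        linarith
  · have hBP : B ≤ P := calc
      B = B ^ (1 - θ) * B ^ θ := by rw [← rpow_add hBpos, sub_add_cancel, rpow_one]
      _ ≤ P := by rw [hP_def]; gcongr
    have hAR : A * R ^ (n - 1) ≤ B / R := by
      rw [hpow_pred R hR.ne', ← hρn]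
      gcongr
      exact (not_le.mp hρR).le
    calc X ≤ K * (A * R ^ (n - 1) + B / R) := h R hR le_rfl
      _ ≤ K * (2 / R * P) := by
        gcongr
        calc A * R ^ (n - 1) + B / R ≤ 2 * B / R := by rw [mul_div_assoc]; linarith
          _ ≤ 2 / R * P := by rw [mul_div_right_comm]; gcongr
      _ ≤ (2 + 2 / R) * K * P := by
        have : 0 ≤ 2 * K * P := by positivity
        linarith

/-- Endpoint interpolation inequality: for `b > 0` and `s ∈ ℕ`, `s ≥ 1`, there is a constant
`C > 0` (depending on `b` and `s`) such that for every `φ ∈ H^s((0,b);ℂ)` (here represented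
by an `s`-times continuously differentiable function),
`|φ(b)| ≤ C ‖φ‖_{L²(0,b)}^{1 − 1/(2s)} ‖φ‖_{H^s(0,b)}^{1/(2s)}`. -/
theorem endpoint_interpolation (b : ℝ) (hb : 0 < b) (s : ℕ) (hs : 1 ≤ s) :
    ∃ C : ℝ, 0 < C ∧ ∀ φ : ℝ → ℂ, ContDiff ℝ s φ →
      ‖φ b‖ ≤ C *
        (Real.sqrt (∫ y in (0:ℝ)..b, ‖φ y‖ ^ 2)) ^ ((1 : ℝ) - 1 / (2 * (s : ℝ))) *
        (Real.sqrt (∑ j ∈ Finset.range (s + 1),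
            ∫ y in (0:ℝ)..b, ‖iteratedDeriv j φ y‖ ^ 2)) ^ (1 / (2 * (s : ℝ))) := by
  obtain ⟨M, hM, hest⟩ := exists_norm_apply_right_le_mul_pow_add_div (E := ℂ) s hs
  refine ⟨(2 + 2 / √b) * M, by positivity, fun φ hφ => ?_⟩
  set H := √(∑ j ∈ Finset.range (s + 1), ∫ y in (0:ℝ)..b, ‖iteratedDeriv j φ y‖ ^ 2)
  have hH : ∀ j ≤ s, √(∫ y in (0:ℝ)..b, ‖iteratedDeriv j φ y‖ ^ 2) ≤ H := fun j hj =>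
    sqrt_le_sqrt <| Finset.single_le_sum (f := fun j => ∫ y in (0:ℝ)..b, ‖iteratedDeriv j φ y‖ ^ 2)
      (fun j _ => intervalIntegral.integral_nonneg hb.le fun _ _ => sq_nonneg _)
      (Finset.mem_range.mpr (by omega))
  have hLH : √(∫ y in (0:ℝ)..b, ‖φ y‖ ^ 2) ≤ H := by simpa using hH 0 s.zero_le
  have hlocal : ∀ r, 0 < r → r ≤ √b →
      ‖φ b‖ ≤ M * (H * r ^ (2 * s - 1) + √(∫ y in (0:ℝ)..b, ‖φ y‖ ^ 2) / r) := fun r hr hrb =>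
    (hest φ hφ 0 b r hr (sub_nonneg.mpr ((le_sqrt hr.le hb.le).mp hrb))).trans
      (by gcongr; exact hH s le_rfl)
  have h := le_of_forall_le_mul_pow_add_div (n := 2 * s) (by omega) hM.le (sqrt_pos.mpr hb)
    (sqrt_nonneg _) hLH hlocal
  push_cast at h
  exact h
end
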